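/- Let G ≤ Sym(V) be a transitive permutation group and let H ≤ Sₙ be a transitive permutation group having the EKR-property. Then the intersection density of the wreath product satisfies ρ(G ≀ H) = ρ(G). -/

import Mathlib

/-! ### Basic definitions: derangement graphs, intersecting sets, EKR properties -/

/-- The derangement graph of a permutation group `G ≤ Sym(V)`: vertices are the elements
of `G`, and distinct `g`, `h` are adjacent iff `g * h⁻¹` is fixed-point-free on `V`. -/
def derGraph {V : Type*} (G : Subgroup (Equiv.Perm V)) : SimpleGraph G where
  Adj g h := g ≠ h ∧ ∀ v : V, ((g : Equiv.Perm V) * (h : Equiv.Perm V)⁻¹) v ≠ v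
  symm := ⟨by
    rintro g h ⟨hne, hd⟩
    refine ⟨hne.symm, fun v hv => hd v ?_⟩
    have h2 := congrArg (⇑(((h : Equiv.Perm V) * (g : Equiv.Perm V)⁻¹)⁻¹)) hv
    simpa [mul_inv_rev] using h2.symm⟩
  loopless := ⟨fun g hg => hg.1 rfl⟩

/-- A subset `I` of a permutation group `G ≤ Sym(V)` is intersecting if any two of its
elements agree on some point of `V`. -/
def IsIntersecting {V : Type*} (G : Subgroup (Equiv.Perm V)) (I : Set G) : Prop :=
  ∀ g ∈ I, ∀ h ∈ I, ∃ v : V, (g : Equiv.Perm V) v = (h : Equiv.Perm V) v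

/-- A permutation group `G ≤ Sym(V)` is transitive if it acts transitively on `V`. -/
def IsTransitive {V : Type*} (G : Subgroup (Equiv.Perm V)) : Prop :=
  ∀ v w : V, ∃ g ∈ G, g v = w

/-- A permutation group is regular if it is transitive and all point stabilizers are trivial. -/
def IsRegularGroup {V : Type*} (G : Subgroup (Equiv.Perm V)) : Prop :=
  IsTransitive G ∧ ∀ g ∈ G, ∀ v : V, g v = v → g = 1

/-- The stabilizer of a point `v`, as a subset of the permutation group `G`. -/
def stabSet {V : Type*} (G : Subgroup (Equiv.Perm V)) (v : V) : Set G :=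
  {g : G | (g : Equiv.Perm V) v = v}

/-- The intersection density `ρ(G)` of a (transitive) permutation group `G`: the maximum of
`|I| / |G_v|` over all intersecting sets `I` of `G`, where `G_v` is a point stabilizer. -/
noncomputable def interDensity {V : Type*} (G : Subgroup (Equiv.Perm V)) : ℝ :=
  sSup {x : ℝ | ∃ (I : Set G) (v : V), IsIntersecting G I ∧
    x = (Nat.card I : ℝ) / (Nat.card (stabSet G v) : ℝ)}

/-- A permutation group has the EKR-property if every intersecting set has size at most
the size of the largest point stabilizer. -/
def HasEKR {V : Type*} (G : Subgroup (Equiv.Perm V)) : Prop :=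
  ∀ I : Set G, IsIntersecting G I → Nat.card I ≤ ⨆ v : V, Nat.card (stabSet G v)

/-- A permutation group has the strict-EKR-property if every intersecting set of maximum
size is a coset of a point stabilizer. -/
def HasStrictEKR {V : Type*} (G : Subgroup (Equiv.Perm V)) : Prop :=
  ∀ I : Set G, IsIntersecting G I →
    (∀ J : Set G, IsIntersecting G J → Nat.card J ≤ Nat.card I) →
    ∃ (v : V) (a : G), I = (fun g => a * g) '' stabSet G v

/-! ### Graph products and related graph-theoretic notions -/

/-- The strong product of two simple graphs. -/
def strongProd {α β : Type*} (X : SimpleGraph α) (Y : SimpleGraph β) :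
    SimpleGraph (α × β) where
  Adj p q := (p.1 = q.1 ∧ Y.Adj p.2 q.2) ∨ (p.2 = q.2 ∧ X.Adj p.1 q.1) ∨
    (X.Adj p.1 q.1 ∧ Y.Adj p.2 q.2)
  symm := ⟨by
    rintro p q (⟨h1, h2⟩ | ⟨h1, h2⟩ | ⟨h1, h2⟩)
    · exact Or.inl ⟨h1.symm, h2.symm⟩
    · exact Or.inr (Or.inl ⟨h1.symm, h2.symm⟩)
    · exact Or.inr (Or.inr ⟨h1.symm, h2.symm⟩)⟩
  loopless := ⟨by
    rintro p (⟨_, h⟩ | ⟨_, h⟩ | ⟨h, _⟩)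
    · exact Y.loopless.irrefl _ h
    · exact X.loopless.irrefl _ h
    · exact X.loopless.irrefl _ h⟩

/-- The tensor (direct, categorical) product of two simple graphs. -/
def tensorProd {α β : Type*} (X : SimpleGraph α) (Y : SimpleGraph β) :
    SimpleGraph (α × β) where
  Adj p q := X.Adj p.1 q.1 ∧ Y.Adj p.2 q.2
  symm := ⟨fun _ _ ⟨h1, h2⟩ => ⟨h1.symm, h2.symm⟩⟩
  loopless := ⟨fun _ ⟨h1, _⟩ => X.loopless.irrefl _ h1⟩

/-- The tensor (direct) product of a family of simple graphs: two tuples are adjacent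
iff they are adjacent in every coordinate (for a nonempty index type this coincides with
the definition below, where distinctness is required to keep the graph loopless). -/
def tensorPi {ι : Type*} {α : ι → Type*} (X : ∀ i, SimpleGraph (α i)) :
    SimpleGraph (∀ i, α i) where
  Adj f g := f ≠ g ∧ ∀ i, (X i).Adj (f i) (g i)
  symm := ⟨fun _ _ ⟨hne, h⟩ => ⟨hne.symm, fun i => (h i).symm⟩⟩
  loopless := ⟨fun _ h => h.1 rfl⟩

/-- The disjoint union of `ι`-indexed copies of a simple graph `X`. -/
def copiesGraph (ι : Type*) {α : Type*} (X : SimpleGraph α) : SimpleGraph (ι × α) where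
  Adj p q := p.1 = q.1 ∧ X.Adj p.2 q.2
  symm := ⟨fun _ _ ⟨h1, h2⟩ => ⟨h1.symm, h2.symm⟩⟩
  loopless := ⟨fun _ h => X.loopless.irrefl _ h.2⟩

/-- The lexicographic product (wreath product) `X[Y]` of simple graphs. -/
def lexProd {α β : Type*} (X : SimpleGraph α) (Y : SimpleGraph β) :
    SimpleGraph (α × β) where
  Adj p q := X.Adj p.1 q.1 ∨ (p.1 = q.1 ∧ Y.Adj p.2 q.2)
  symm := ⟨by
    rintro p q (h | ⟨h1, h2⟩)
    · exact Or.inl h.symm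
    · exact Or.inr ⟨h1.symm, h2.symm⟩⟩
  loopless := ⟨by
    rintro p (h | ⟨_, h⟩)
    · exact X.loopless.irrefl _ h
    · exact Y.loopless.irrefl _ h⟩

/-- A simple graph is complete multipartite with `k` parts if its vertex set can be
partitioned into `k` (nonempty) parts so that two vertices are adjacent iff they lie in
different parts. -/
def IsCompleteMultipartiteWith {α : Type*} (X : SimpleGraph α) (k : ℕ) : Prop :=
  ∃ f : α → Fin k, Function.Surjective f ∧ ∀ a b : α, X.Adj a b ↔ f a ≠ f b

/-- An independent set (coclique) of a simple graph. -/
def IsIndep {α : Type*} (X : SimpleGraph α) (A : Set α) : Prop :=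
  ∀ a ∈ A, ∀ b ∈ A, ¬ X.Adj a b

/-- The independence number `α(X)` of a simple graph. -/
noncomputable def indepNum {α : Type*} (X : SimpleGraph α) : ℕ :=
  sSup {k : ℕ | ∃ A : Set α, IsIndep X A ∧ Nat.card A = k}

/-- The closed neighbourhood `N[A]` of a set `A` of vertices. -/
def closedNbhd {α : Type*} (X : SimpleGraph α) (A : Set α) : Set α :=
  {b | ∃ a ∈ A, a = b ∨ X.Adj a b}

/-- A graph `X` is IS-primitive if there is no non-maximum independent set `A` with
`|A| / |N[A]| = α(X) / |V(X)|`. -/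
def IsISPrimitive {α : Type*} (X : SimpleGraph α) : Prop :=
  ¬ ∃ A : Set α, IsIndep X A ∧ Nat.card A < indepNum X ∧
    (Nat.card A : ℚ) / (Nat.card (closedNbhd X A) : ℚ) =
      (indepNum X : ℚ) / (Nat.card α : ℚ)

/-- A simple graph is vertex-transitive if its automorphism group acts transitively on the
vertices. -/
def IsVertexTransitive {α : Type*} (X : SimpleGraph α) : Prop :=
  ∀ a b : α, ∃ e : X ≃g X, e a = b

/-! ### External and internal direct products of permutation groups -/

/-- The canonical monoid homomorphism `Sym(V) × Sym(W) → Sym(V × W)`. -/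
def permProdCongrHom (V W : Type*) : Equiv.Perm V × Equiv.Perm W →* Equiv.Perm (V × W) where
  toFun p := Equiv.prodCongr p.1 p.2
  map_one' := Equiv.ext fun _ => rfl
  map_mul' := fun _ _ => Equiv.ext fun _ => rfl

/-- The external direct product of permutation groups `G ≤ Sym(V)` and `H ≤ Sym(W)`,
acting on `V × W` by `(g,h)⬝(v,w) = (g v, h w)`. -/
def extProd {V W : Type*} (G : Subgroup (Equiv.Perm V)) (H : Subgroup (Equiv.Perm W)) :
    Subgroup (Equiv.Perm (V × W)) :=
  Subgroup.map (permProdCongrHom V W) (G.prod H)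

/-- The internal direct product of a family of permutation groups `G i ≤ Sym(V i)`,
acting componentwise on the disjoint union `Σ i, V i`. -/
def intProd {ι : Type*} {V : ι → Type*} (G : ∀ i, Subgroup (Equiv.Perm (V i))) :
    Subgroup (Equiv.Perm (Σ i, V i)) :=
  Subgroup.map (Equiv.Perm.sigmaCongrRightHom V) (Subgroup.pi Set.univ G)

/-! ### Wreath products of permutation groups -/

/-- The permutation of `V × {1,…,n}` associated to an element `((g₁,…,gₙ), h)` of the
wreath product: `(a, i) ↦ (gᵢ a, h i)`. -/
def wreathPerm {V : Type*} {n : ℕ} (g : Fin n → Equiv.Perm V) (h : Equiv.Perm (Fin n)) :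
    Equiv.Perm (V × Fin n) where
  toFun p := (g p.2 p.1, h p.2)
  invFun p := ((g (h⁻¹ p.2))⁻¹ p.1, h⁻¹ p.2)
  left_inv := by rintro ⟨a, i⟩; simp
  right_inv := by rintro ⟨b, j⟩; simp

/-- The wreath product `G ≀ H` of `G ≤ Sym(V)` by `H ≤ Sₙ`, as a permutation group
acting on `V × {1,…,n}`. -/
def wreathProd {V : Type*} {n : ℕ} (G : Subgroup (Equiv.Perm V))
    (H : Subgroup (Equiv.Perm (Fin n))) : Subgroup (Equiv.Perm (V × Fin n)) where
  carrier := {σ | ∃ (g : Fin n → Equiv.Perm V) (h : Equiv.Perm (Fin n)),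
    (∀ i, g i ∈ G) ∧ h ∈ H ∧ σ = wreathPerm g h}
  one_mem' := ⟨fun _ => 1, 1, fun _ => G.one_mem, H.one_mem, Equiv.ext fun _ => rfl⟩
  mul_mem' := by
    rintro σ τ ⟨g, h, hg, hh, rfl⟩ ⟨g', h', hg', hh', rfl⟩
    exact ⟨fun i => g (h' i) * g' i, h * h',
      fun i => G.mul_mem (hg _) (hg' _), H.mul_mem hh hh', Equiv.ext fun _ => rfl⟩
  inv_mem' := by
    rintro σ ⟨g, h, hg, hh, rfl⟩
    exact ⟨fun i => (g (h⁻¹ i))⁻¹, h⁻¹,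
      fun i => G.inv_mem (hg _), H.inv_mem hh, Equiv.ext fun _ => rfl⟩

theorem mem_wreathProd {V : Type*} {n : ℕ} {G : Subgroup (Equiv.Perm V)}
    {H : Subgroup (Equiv.Perm (Fin n))} {σ : Equiv.Perm (V × Fin n)} :
    σ ∈ wreathProd G H ↔ ∃ (g : Fin n → Equiv.Perm V) (h : Equiv.Perm (Fin n)),
      (∀ i, g i ∈ G) ∧ h ∈ H ∧ σ = wreathPerm g h := Iff.rfl

/-!
For transitive `K`, `ρ(K) = α(K) / |K_v|`, where `α(K)` (`maxInterCard K`) is the largest size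
of an intersecting set. Write the elements of `G ≀ H` as pairs `(g, h)` with `g ∈ Gⁿ`, `h ∈ H`.
If `I` is a largest intersecting set of `G`, then `{(g, h) | g i ∈ I, h i = i}` is intersecting,
and it has the same shape as the stabilizer of `(v, i)`, with `I` in place of `G_v`.
Conversely, the `H`-components of an intersecting set `J` of `G ≀ H` form an intersecting set
of `H`, so there are at most `|H_i|` of them by the EKR-property; and the `Gⁿ`-components over a
fixed `h` are tuples any two of which agree at some point of some coordinate. Normalising
`g ↦ (g i)⁻¹ • g` splits such a set of tuples into fibres on which `g ↦ g i` is injective with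
intersecting image in `G`, so it has at most `α(G) · |G|ⁿ⁻¹` elements. Hence
`α(G ≀ H) = α(G) · |G|ⁿ⁻¹ · |H_i|` and `|(G ≀ H)_(v,i)| = |G_v| · |G|ⁿ⁻¹ · |H_i|`.
-/

open Function Set

section Counting

theorem natCard_le_mul_natCard_of_mapsTo {α β : Type*} [Finite α] [Finite β] {f : α → β}
    {s : Set α} {t : Set β} (hf : MapsTo f s t) (m : ℕ)
    (hm : ∀ b ∈ t, Nat.card {a | a ∈ s ∧ f a = b} ≤ m) : Nat.card s ≤ m * Nat.card t := by
  classical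
  have := Fintype.ofFinite α
  have := Fintype.ofFinite β
  simp only [Nat.card_eq_card_toFinset] at hm ⊢
  refine Finset.card_le_mul_card_image_of_maps_to
    (fun a ha => by simpa using hf (by simpa using ha)) m fun b hb => ?_
  convert hm b (by simpa using hb) using 2
  ext; simp

end Counting

section IntersectionNumber

variable {V : Type*}

theorem card_stabSet_eq_of_isTransitive {K : Subgroup (Equiv.Perm V)} (hK : IsTransitive K)
    (v w : V) : Nat.card (stabSet K v) = Nat.card (stabSet K w) := by
  obtain ⟨σ, hσ, rfl⟩ := hK v w
  refine Nat.card_congr ((MulAut.conj (⟨σ, hσ⟩ : K)).toEquiv.subtypeEquiv fun g => ?_)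
  simp [stabSet]

noncomputable def maxInterCard (K : Subgroup (Equiv.Perm V)) : ℕ :=
  sSup {k : ℕ | ∃ I : Set K, IsIntersecting K I ∧ Nat.card I = k}

variable [Finite V] (K : Subgroup (Equiv.Perm V))

theorem bddAbove_card_isIntersecting :
    BddAbove {k : ℕ | ∃ I : Set K, IsIntersecting K I ∧ Nat.card I = k} :=
  ⟨Nat.card K, by rintro _ ⟨I, -, rfl⟩; exact Nat.card_le_card_of_injective _ Subtype.val_injective⟩

theorem card_le_maxInterCard {I : Set K} (hI : IsIntersecting K I) :
    Nat.card I ≤ maxInterCard K :=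
  le_csSup (bddAbove_card_isIntersecting K) ⟨I, hI, rfl⟩

theorem exists_isIntersecting_card_eq_maxInterCard :
    ∃ I : Set K, IsIntersecting K I ∧ Nat.card I = maxInterCard K := by
  refine Nat.sSup_mem ?_ (bddAbove_card_isIntersecting K)
  exact ⟨0, ∅, fun _ h => h.elim, by simp⟩

variable {K} in
theorem interDensity_eq_maxInterCard_div (hK : IsTransitive K) (v : V) :
    interDensity K = maxInterCard K / Nat.card (stabSet K v) := by
  have : Nonempty (stabSet K v) := ⟨1, rfl⟩
  have hpos : (0 : ℝ) < Nat.card (stabSet K v) := by exact_mod_cast Nat.card_pos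
  have hle : ∀ x ∈ {x : ℝ | ∃ (I : Set K) (w : V), IsIntersecting K I ∧
      x = (Nat.card I : ℝ) / (Nat.card (stabSet K w) : ℝ)},
      x ≤ maxInterCard K / Nat.card (stabSet K v) := by
    rintro _ ⟨I, w, hI, rfl⟩
    rw [card_stabSet_eq_of_isTransitive hK w v, div_le_div_iff_of_pos_right hpos]
    exact_mod_cast card_le_maxInterCard K hI
  obtain ⟨I, hI, hIcard⟩ := exists_isIntersecting_card_eq_maxInterCard K
  exact le_antisymm (csSup_le ⟨_, I, v, hI, rfl⟩ hle) (le_csSup ⟨_, hle⟩ ⟨I, v, hI, by rw [hIcard]⟩)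

end IntersectionNumber

section Tuples

variable {ι K : Type*} [Group K]

def piEquivProdEqOne (i : ι) : (ι → K) ≃ K × {c : ι → K // c i = 1} where
  toFun g := (g i, ⟨(g i)⁻¹ • g, by simp⟩)
  invFun p := p.1 • p.2.1
  left_inv g := smul_inv_smul (g i) g
  right_inv := by
    rintro ⟨x, c, hc⟩
    ext <;> simp [hc]

theorem card_setOf_apply_mem (i : ι) (S : Set K) :
    Nat.card {g : ι → K | g i ∈ S} = Nat.card S * Nat.card {c : ι → K // c i = 1} := by
  rw [← Nat.card_prod]
  exact Nat.card_congr (((piEquivProdEqOne i).subtypeEquiv fun g => Iff.rfl).trans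
    Equiv.prodSubtypeFstEquivSubtypeProd)

end Tuples

theorem card_le_maxInterCard_mul_of_forall_exists_apply_eq {ι V : Type*} [Finite ι] [Finite V]
    {K : Subgroup (Equiv.Perm V)} (i : ι) {A : Set (ι → K)}
    (hA : ∀ f ∈ A, ∀ f' ∈ A, ∃ j a, (f j : Equiv.Perm V) a = (f' j : Equiv.Perm V) a) :
    Nat.card A ≤ maxInterCard K * Nat.card {c : ι → K // c i = 1} := by
  refine natCard_le_mul_natCard_of_mapsTo (f := fun g : ι → K => (g i)⁻¹ • g)
    (t := {c | c i = 1}) (fun g _ => by simp) _ fun c _ => ?_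
  have hfib {g : ι → K} (hg : (g i)⁻¹ • g = c) : g = g i • c := inv_smul_eq_iff.mp hg
  have hinj : InjOn (fun g => g i) {g | g ∈ A ∧ (g i)⁻¹ • g = c} := by
    intro g hg g' hg' h
    rw [hfib hg.2, hfib hg'.2]
    exact congrArg (· • c) h
  rw [← Nat.card_image_of_injOn hinj]
  refine card_le_maxInterCard K ?_
  rintro _ ⟨g, ⟨hg, hgc⟩, rfl⟩ _ ⟨g', ⟨hg', hg'c⟩, rfl⟩
  obtain ⟨j, a, h⟩ := hA g hg g' hg'
  refine ⟨(c j : Equiv.Perm V) a, ?_⟩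
  rw [congrFun (hfib hgc) j, congrFun (hfib hg'c) j] at h
  simpa using h

section WreathProduct

variable {V : Type*} {n : ℕ}

@[simp]
theorem wreathPerm_apply (g : Fin n → Equiv.Perm V) (h : Equiv.Perm (Fin n)) (a : V) (i : Fin n) :
    wreathPerm g h (a, i) = (g i a, h i) :=
  rfl

theorem wreathPerm_injective2 [Nonempty V] : Injective2 (wreathPerm (V := V) (n := n)) := by
  intro g h g' h' hgh
  have hpt (a : V) (i : Fin n) := (Prod.ext_iff.mp (Equiv.ext_iff.mp hgh (a, i)))
  exact ⟨funext fun i => Equiv.ext fun a => (hpt a i).1,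
    Equiv.ext fun i => (hpt (Classical.arbitrary V) i).2⟩

theorem isTransitive_wreathProd {G : Subgroup (Equiv.Perm V)} {H : Subgroup (Equiv.Perm (Fin n))}
    (hG : IsTransitive G) (hH : IsTransitive H) : IsTransitive (wreathProd G H) := by
  rintro ⟨a, i⟩ ⟨b, j⟩
  obtain ⟨g, hg, rfl⟩ := hG a b
  obtain ⟨h, hh, rfl⟩ := hH i j
  exact ⟨wreathPerm (fun _ => g) h, ⟨_, _, fun _ => hg, hh, rfl⟩, rfl⟩

variable [Nonempty V] (G : Subgroup (Equiv.Perm V)) (H : Subgroup (Equiv.Perm (Fin n)))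

noncomputable def wreathEquiv : (Fin n → G) × H ≃ wreathProd G H :=
  Equiv.ofBijective
    (fun p => ⟨wreathPerm (fun i => p.1 i) p.2, _, _, fun i => (p.1 i).2, p.2.2, rfl⟩)
    ⟨fun p q hpq => by
      have hpq' := congrArg Subtype.val hpq
      dsimp only at hpq'
      obtain ⟨h1, h2⟩ := wreathPerm_injective2 hpq'
      exact Prod.ext (funext fun i => Subtype.ext (congrFun h1 i)) (Subtype.ext h2),
    by
      rintro ⟨_, g, h, hg, hh, rfl⟩
      exact ⟨(fun i => ⟨g i, hg i⟩, ⟨h, hh⟩), rfl⟩⟩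

@[simp]
theorem coe_wreathEquiv (p : (Fin n → G) × H) :
    (wreathEquiv G H p : Equiv.Perm (V × Fin n)) = wreathPerm (fun i => p.1 i) p.2 :=
  rfl

theorem card_image_wreathEquiv_prod (i : Fin n) (S : Set G) (T : Set H) :
    Nat.card (wreathEquiv G H '' ({g | g i ∈ S} ×ˢ T)) =
      Nat.card S * Nat.card {c : Fin n → G // c i = 1} * Nat.card T := by
  rw [Nat.card_image_of_injective (wreathEquiv G H).injective, Nat.card_congr (Equiv.Set.prod _ _),
    Nat.card_prod, card_setOf_apply_mem]

theorem stabSet_wreathProd (v : V) (i : Fin n) :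
    stabSet (wreathProd G H) (v, i) =
      wreathEquiv G H '' ({g | g i ∈ stabSet G v} ×ˢ stabSet H i) := by
  ext σ
  obtain ⟨p, rfl⟩ := (wreathEquiv G H).surjective σ
  simp [stabSet]

variable {G H}

theorem le_maxInterCard_wreathProd [Finite V] (i : Fin n) :
    maxInterCard G * Nat.card {c : Fin n → G // c i = 1} * Nat.card (stabSet H i) ≤
      maxInterCard (wreathProd G H) := by
  obtain ⟨I, hI, hIcard⟩ := exists_isIntersecting_card_eq_maxInterCard G
  rw [← hIcard, ← card_image_wreathEquiv_prod]
  refine card_le_maxInterCard _ ?_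
  rintro _ ⟨p, ⟨hp, hpi⟩, rfl⟩ _ ⟨q, ⟨hq, hqi⟩, rfl⟩
  obtain ⟨a, ha⟩ := hI _ hp _ hq
  exact ⟨(a, i), by simp_all [stabSet]⟩

theorem maxInterCard_wreathProd_le [Finite V] (hH : IsTransitive H) (hEKR : HasEKR H)
    (i : Fin n) :
    maxInterCard (wreathProd G H) ≤
      maxInterCard G * Nat.card {c : Fin n → G // c i = 1} * Nat.card (stabSet H i) := by
  obtain ⟨J, hJ, hJcard⟩ := exists_isIntersecting_card_eq_maxInterCard (wreathProd G H)
  set J' := wreathEquiv G H ⁻¹' J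
  have hmeet : ∀ p ∈ J', ∀ q ∈ J', ∃ a j, (p.1 j : Equiv.Perm V) a = (q.1 j : Equiv.Perm V) a ∧
      (p.2 : Equiv.Perm (Fin n)) j = (q.2 : Equiv.Perm (Fin n)) j := by
    intro p hp q hq
    obtain ⟨⟨a, j⟩, h⟩ := hJ _ hp _ hq
    exact ⟨a, j, by simpa using h⟩
  have : Nonempty (Fin n) := ⟨i⟩
  have hP : Nat.card (Prod.snd '' J') ≤ Nat.card (stabSet H i) := by
    refine (hEKR _ ?_).trans (ciSup_le fun j => (card_stabSet_eq_of_isTransitive hH j i).le)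
    rintro _ ⟨p, hp, rfl⟩ _ ⟨q, hq, rfl⟩
    obtain ⟨a, j, -, h⟩ := hmeet p hp q hq
    exact ⟨j, h⟩
  have hfiber (h : H) : {p | p ∈ J' ∧ p.2 = h} = (·, h) '' {g | (g, h) ∈ J'} := by
    ext ⟨g, h'⟩
    constructor
    · rintro ⟨hp, rfl⟩
      exact ⟨g, hp, rfl⟩
    · rintro ⟨g, hg, hgh⟩
      rw [← hgh]
      exact ⟨hg, rfl⟩
  rw [← hJcard, ← Nat.card_preimage_of_injective (wreathEquiv G H).injective (by simp)]
  calc Nat.card J'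
      ≤ maxInterCard G * Nat.card {c : Fin n → G // c i = 1} * Nat.card (Prod.snd '' J') := by
        refine natCard_le_mul_natCard_of_mapsTo (mapsTo_image _ _) _ fun h _ => ?_
        rw [hfiber, Nat.card_image_of_injective (Prod.mk_left_injective h)]
        refine card_le_maxInterCard_mul_of_forall_exists_apply_eq i fun g hg g' hg' => ?_
        obtain ⟨a, j, h, -⟩ := hmeet _ hg _ hg'
        exact ⟨j, a, h⟩
    _ ≤ _ := Nat.mul_le_mul_left _ hP

theorem maxInterCard_wreathProd [Finite V] (hH : IsTransitive H) (hEKR : HasEKR H) (i : Fin n) :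
    maxInterCard (wreathProd G H) =
      maxInterCard G * Nat.card {c : Fin n → G // c i = 1} * Nat.card (stabSet H i) :=
  (maxInterCard_wreathProd_le hH hEKR i).antisymm (le_maxInterCard_wreathProd i)

end WreathProduct

/-- If `G ≤ Sym(V)` is transitive and `H ≤ Sₙ` is transitive with the
EKR-property, then `ρ(G ≀ H) = ρ(G)`. -/
theorem interDensity_wreathProd_of_EKR {V : Type*} [Fintype V] [Nonempty V] {n : ℕ}
    (hn : 0 < n) (G : Subgroup (Equiv.Perm V)) (H : Subgroup (Equiv.Perm (Fin n)))
    (hG : IsTransitive G) (hH : IsTransitive H) (hEKR : HasEKR H) :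
    interDensity (wreathProd G H) = interDensity G := by
  obtain ⟨v⟩ := ‹Nonempty V›
  let i : Fin n := ⟨0, hn⟩
  have hc : 0 < Nat.card {c : Fin n → G // c i = 1} * Nat.card (stabSet H i) :=
    Nat.mul_pos (Nat.card_pos_iff.mpr ⟨⟨⟨1, rfl⟩⟩, inferInstance⟩)
      (Nat.card_pos_iff.mpr ⟨⟨⟨1, rfl⟩⟩, inferInstance⟩)
  rw [interDensity_eq_maxInterCard_div hG v,
    interDensity_eq_maxInterCard_div (isTransitive_wreathProd hG hH) (v, i),
    maxInterCard_wreathProd hH hEKR i, stabSet_wreathProd, card_image_wreathEquiv_prod,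
    mul_assoc, mul_assoc]
  push_cast
  exact mul_div_mul_right _ _ (by exact_mod_cast hc.ne')
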